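/- arXiv:2404.05045 — 3 statements merged into one kernel-verified Lean document; each statement's English description precedes it below -/
import Mathlib

section
/- Let ε ∈ (0,1/2], and let p and γ be integers with γ ≥ 1 and p ≥ 1 + 1/ε. Let α_0,…,α_{γp} and β_0,…,β_{γp} be real numbers satisfying α_a ≥ 0 and 0 ≤ β_a ≤ (1+2ε)·α_a for all 0 ≤ a ≤ γp, and β_{a+1} ≤ α_a + β_a for all 0 ≤ a ≤ γp−1. Then Σ_{a=0}^{γp−1} α_a + Σ_{ℓ=0}^{γ} β_{ℓp} + Σ_{ℓ=1}^{γ} β_{ℓp} ≤ (2+2ε)·Σ_{a=0}^{γp} α_a. -/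
/-!
Cut `(0, γp]` into the blocks `((ℓ-1)p, ℓp]`. In each block, one copy of `β_{ℓp}` is paid for
by `α_{ℓp}`. For the other, telescoping `β_{a+1} ≤ α_a + β_a` from any interior index `b` gives
`β_{ℓp} ≤ S + (1+2ε)α_b`, where `S` is the sum of `α` over the interior of the block; averaging
over the `p - 1` choices of `b` gives `β_{ℓp} ≤ (1 + (1+2ε)/(p-1)) S ≤ (1+2ε) S`, the last step
because `p - 1 ≥ 1/ε ≥ (1+2ε)/(2ε)` for `ε ≤ 1/2`. Finally `β_0 ≤ (1+2ε)α_0`, and the unpaired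
`Σ α_a` is at most the whole sum.
-/

open Finset

theorem le_sum_Ico_add_of_le_add {M : Type*} [AddCommMonoid M] [PartialOrder M]
    [IsOrderedAddMonoid M] {f g : ℕ → M} {m n : ℕ} (hmn : m ≤ n)
    (hstep : ∀ a ∈ Ico m n, g (a + 1) ≤ f a + g a) :
    g n ≤ (∑ a ∈ Ico m n, f a) + g m := by
  induction n, hmn using Nat.le_induction with
  | base => simp
  | succ n hmn ih =>
    rw [sum_Ico_succ_top hmn, add_right_comm]
    calc g (n + 1) ≤ f n + g n := hstep n (by simp [hmn])
      _ ≤ f n + ((∑ a ∈ Ico m n, f a) + g m) :=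
        add_le_add_right (ih fun a ha ↦ hstep a (Ico_subset_Ico_right n.le_succ ha)) _
      _ = _ := by abel

theorem le_mul_sum_Ioo_of_le_add {α β : ℕ → ℝ} {c : ℝ} {m n : ℕ} (hmn : m + 1 < n)
    (hα : ∀ a ∈ Ioo m n, 0 ≤ α a) (hβα : ∀ a ∈ Ioo m n, β a ≤ c * α a)
    (hstep : ∀ a ∈ Ioo m n, β (a + 1) ≤ α a + β a)
    (hc : c ≤ (c - 1) * ((n - m - 1 : ℕ) : ℝ)) :
    β n ≤ c * ∑ a ∈ Ioo m n, α a := by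
  set S := ∑ a ∈ Ioo m n, α a
  have hS : 0 ≤ S := sum_nonneg hα
  have hβ_le : ∀ b ∈ Ioo m n, β n ≤ S + c * α b := by
    intro b hb
    have hsub : Ico b n ⊆ Ioo m n := Ico_subset_Ioo_left (mem_Ioo.1 hb).1
    calc β n ≤ (∑ a ∈ Ico b n, α a) + β b :=
          le_sum_Ico_add_of_le_add (mem_Ioo.1 hb).2.le fun a ha ↦ hstep a (hsub ha)
      _ ≤ S + c * α b :=
          add_le_add (sum_le_sum_of_subset_of_nonneg hsub fun a ha _ ↦ hα a ha) (hβα b hb)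
  have hk : (0 : ℝ) < (n - m - 1 : ℕ) := by exact_mod_cast (by omega : 0 < n - m - 1)
  have havg : ((n - m - 1 : ℕ) : ℝ) * β n ≤ (n - m - 1 : ℕ) * S + c * S := by
    simpa [sum_add_distrib, ← mul_sum] using sum_le_sum hβ_le
  refine le_of_mul_le_mul_left ?_ hk
  nlinarith

theorem two_mul_le_mul_sum_Ioc_of_le_add {α β : ℕ → ℝ} {c : ℝ} {m n : ℕ} (hmn : m + 1 < n)
    (hα : ∀ a ∈ Ioc m n, 0 ≤ α a) (hβα : ∀ a ∈ Ioc m n, β a ≤ c * α a)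
    (hstep : ∀ a ∈ Ioo m n, β (a + 1) ≤ α a + β a)
    (hc : c ≤ (c - 1) * ((n - m - 1 : ℕ) : ℝ)) :
    2 * β n ≤ c * ∑ a ∈ Ioc m n, α a := by
  have hinterior := le_mul_sum_Ioo_of_le_add hmn (fun a ha ↦ hα a (Ioo_subset_Ioc_self ha))
    (fun a ha ↦ hβα a (Ioo_subset_Ioc_self ha)) hstep hc
  have htop := hβα n (right_mem_Ioc.2 (by omega))
  rw [← sum_Ioo_add_eq_sum_Ioc (by omega), mul_add]
  linarith

theorem sum_Ioc_zero_mul_eq_sum_Icc_sum_Ioc {M : Type*} [AddCommMonoid M] (f : ℕ → M)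
    (p γ : ℕ) :
    ∑ a ∈ Ioc 0 (γ * p), f a = ∑ l ∈ Icc 1 γ, ∑ a ∈ Ioc ((l - 1) * p) (l * p), f a := by
  induction γ with
  | zero => simp
  | succ γ ih =>
    rw [sum_Icc_succ_top (by omega), ← ih, Nat.add_sub_cancel,
      sum_Ioc_consecutive _ (Nat.zero_le _) (Nat.mul_le_mul_right p γ.le_succ)]

theorem one_add_two_mul_le_two_mul_mul_pred {ε : ℝ} (hε : ε ∈ Set.Ioc (0 : ℝ) (1 / 2)) {p : ℕ}
    (hp : 1 + 1 / ε ≤ p) : 1 + 2 * ε ≤ 2 * ε * ((p - 1 : ℕ) : ℝ) := by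
  obtain ⟨hε0, hε2⟩ := hε
  have hp1 : 1 ≤ p := by exact_mod_cast (le_add_of_nonneg_right (by positivity)).trans hp
  have : 1 ≤ ε * ((p : ℝ) - 1) := by
    rw [← div_le_iff₀' hε0]
    linarith
  push_cast [hp1]
  linarith

theorem tree_cover_stretch_arithmetic_general (ε : ℝ) (hε : ε ∈ Set.Ioc (0 : ℝ) (1 / 2))
    (p γ : ℕ) (hp : (1 : ℝ) + 1 / ε ≤ (p : ℝ))
    (α β : ℕ → ℝ)
    (hα : ∀ a ≤ γ * p, 0 ≤ α a)
    (hβα : ∀ a ≤ γ * p, β a ≤ (1 + 2 * ε) * α a)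
    (hstep : ∀ a < γ * p, β (a + 1) ≤ α a + β a) :
    (∑ a ∈ Finset.range (γ * p), α a) + (∑ l ∈ Finset.range (γ + 1), β (l * p)) +
        (∑ l ∈ Finset.Icc 1 γ, β (l * p)) ≤
      (2 + 2 * ε) * ∑ a ∈ Finset.range (γ * p + 1), α a := by
  have hc := one_add_two_mul_le_two_mul_mul_pred hε hp
  have hp2 : 2 ≤ p := by
    by_contra! h
    simp [Nat.sub_eq_zero_of_le (Nat.le_of_lt_succ h)] at hc
    linarith [hε.1]
  have hblocks : 2 * ∑ l ∈ Icc 1 γ, β (l * p) ≤ (1 + 2 * ε) * ∑ a ∈ Ioc 0 (γ * p), α a := by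
    rw [sum_Ioc_zero_mul_eq_sum_Icc_sum_Ioc, mul_sum, mul_sum]
    refine sum_le_sum fun l hl ↦ ?_
    obtain ⟨k, rfl⟩ : ∃ k, l = k + 1 := ⟨l - 1, by grind⟩
    have hkγ : k * p + p ≤ γ * p := by
      simpa [add_one_mul] using Nat.mul_le_mul_right p (mem_Icc.1 hl).2
    simp only [Nat.add_sub_cancel, add_one_mul]
    refine two_mul_le_mul_sum_Ioc_of_le_add (by omega) (fun a ha ↦ hα a (by grind))
      (fun a ha ↦ hβα a (by grind)) (fun a ha ↦ hstep a (by grind)) ?_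
    rw [show k * p + p - k * p - 1 = p - 1 by omega]
    linarith
  have hα0 : ∑ a ∈ range (γ * p + 1), α a = α 0 + ∑ a ∈ Ioc 0 (γ * p), α a := by
    rw [Nat.range_succ_eq_Icc_zero, add_sum_Ioc_eq_sum_Icc (Nat.zero_le _)]
  have hβ0 : ∑ l ∈ range (γ + 1), β (l * p) = β 0 + ∑ l ∈ Icc 1 γ, β (l * p) := by
    rw [Nat.range_succ_eq_Icc_zero, ← add_sum_Ioc_eq_sum_Icc (Nat.zero_le _), zero_mul,
      ← Icc_add_one_left_eq_Ioc, zero_add]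
  have hlast : ∑ a ∈ range (γ * p), α a ≤ ∑ a ∈ range (γ * p + 1), α a := by
    simpa [sum_range_succ] using hα _ le_rfl
  linear_combination hlast + hblocks + hβα 0 (Nat.zero_le _) + hβ0 - (1 + 2 * ε) * hα0

/-- The arithmetic core of the stretch analysis of the
`(2+ε)`-stretch non-Steiner tree cover: for `ε ∈ (0,1/2]`, integers `γ ≥ 1` and
`p ≥ 1 + 1/ε`, and sequences `α, β` with `α_a ≥ 0`, `0 ≤ β_a ≤ (1+2ε)·α_a`
(for `0 ≤ a ≤ γp`) and `β_{a+1} ≤ α_a + β_a` (for `0 ≤ a ≤ γp−1`), we have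
`Σ_{a=0}^{γp−1} α_a + Σ_{ℓ=0}^{γ} β_{ℓp} + Σ_{ℓ=1}^{γ} β_{ℓp}
  ≤ (2+2ε)·Σ_{a=0}^{γp} α_a`. -/
theorem tree_cover_stretch_arithmetic (ε : ℝ) (hε : ε ∈ Set.Ioc (0 : ℝ) (1 / 2))
    (p γ : ℕ) (hγ : 1 ≤ γ) (hp : (1 : ℝ) + 1 / ε ≤ (p : ℝ))
    (α β : ℕ → ℝ)
    (hα : ∀ a ≤ γ * p, 0 ≤ α a)
    (hβ0 : ∀ a ≤ γ * p, 0 ≤ β a)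
    (hβα : ∀ a ≤ γ * p, β a ≤ (1 + 2 * ε) * α a)
    (hstep : ∀ a < γ * p, β (a + 1) ≤ α a + β a) :
    (∑ a ∈ Finset.range (γ * p), α a) + (∑ l ∈ Finset.range (γ + 1), β (l * p)) +
        (∑ l ∈ Finset.Icc 1 γ, β (l * p)) ≤
      (2 + 2 * ε) * ∑ a ∈ Finset.range (γ * p + 1), α a :=
  tree_cover_stretch_arithmetic_general ε hε p γ hp α β hα hβα hstep
end

section
/- Let n ≥ 2 and M ≥ n be integers, and let d be the comb leaf metric on {1,…,n} with parameter M. Let G be a simple graph on {1,…,n} that is a 2-spanner of ({1,…,n}, d), i.e., with each edge {i,j} of length d(i,j) the walk-distance satisfies d_G(i,j) ≤ 2·d(i,j) for all i,j. Then for every pair i ≠ j with {i,j} not an edge of G, there exists t ∉ {i,j} such that {i,t} and {t,j} are edges of G and |i−t| + |j−t| ≤ 2·|j−i|. -/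
/-!
The 2-spanner property gives a walk from `i` to `j` of length `< 2 d(i,j) + 1`. Every edge costs
at least `2M + 1`, while `2 d(i,j) + 1 < 4M + 2n + 1 ≤ 3 (2M + 1)`, so the walk has at most two
edges, hence exactly two, `i – t – j`, since `{i,j} ∉ G`. Cancelling `4M` in
`d(i,t) + d(t,j) < 2 d(i,j) + 1` leaves `|i−t| + |t−j| < 2|i−j| + 1`, an inequality of integers.
-/

open scoped ENNReal

/-- The total length of a walk with respect to an edge-length function. -/
noncomputable def walkLen {V : Type*} {G : SimpleGraph V} {x y : V}
    (len : V → V → ℝ≥0∞) (p : G.Walk x y) : ℝ≥0∞ :=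
  (p.darts.map (fun d => len d.toProd.1 d.toProd.2)).sum

/-- Walk-distance in a graph with edge lengths: the infimum over walks of the total
length (`∞` if no walk exists). -/
noncomputable def gdist {V : Type*} (G : SimpleGraph V) (len : V → V → ℝ≥0∞)
    (x y : V) : ℝ≥0∞ :=
  ⨅ p : G.Walk x y, walkLen len p

/-- The comb leaf metric on `{1,…,n}` with parameter `M`:
`d(i,j) = 2M + |i−j|` for `i ≠ j`, and `d(i,i) = 0`. -/
def combLeafD (n M : ℕ) (i j : Fin n) : ℝ :=
  if i = j then 0 else 2 * M + |(i.val : ℝ) - (j.val : ℝ)|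

section walkLen

variable {V : Type*} {G : SimpleGraph V} (len : V → V → ℝ≥0∞)

@[simp]
lemma walkLen_nil {x : V} : walkLen len (SimpleGraph.Walk.nil : G.Walk x x) = 0 := by
  simp [walkLen]

@[simp]
lemma walkLen_cons {x y z : V} (h : G.Adj x y) (p : G.Walk y z) :
    walkLen len (SimpleGraph.Walk.cons h p) = len x y + walkLen len p := by
  simp [walkLen]

lemma length_mul_le_walkLen {m : ℝ≥0∞} (hm : ∀ a b, G.Adj a b → m ≤ len a b) {x y : V}
    (p : G.Walk x y) : p.length * m ≤ walkLen len p := by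
  induction p with
  | nil => simp
  | cons h p ih =>
    rw [SimpleGraph.Walk.length_cons, walkLen_cons, Nat.cast_succ, add_mul, one_mul, add_comm]
    exact add_le_add (hm _ _ h) ih

end walkLen

namespace combLeafD

variable {n M : ℕ}

lemma of_ne {i j : Fin n} (h : i ≠ j) :
    combLeafD n M i j = 2 * M + |(i.val : ℝ) - (j.val : ℝ)| := by
  simp [combLeafD, h]

lemma nonneg (i j : Fin n) : 0 ≤ combLeafD n M i j := by
  unfold combLeafD
  split_ifs <;> positivity

lemma two_mul_add_one_le {i j : Fin n} (h : i ≠ j) : 2 * M + 1 ≤ combLeafD n M i j := by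
  have hval : (i.val : ℤ) ≠ j.val := by exact_mod_cast Fin.val_ne_of_ne h
  have : (1 : ℝ) ≤ |(i.val : ℝ) - j.val| := by
    exact_mod_cast Int.one_le_abs (sub_ne_zero.mpr hval)
  rw [of_ne h]
  linarith

lemma lt_two_mul_add (i j : Fin n) : combLeafD n M i j < 2 * M + n := by
  have hi : (i.val : ℝ) < n := by exact_mod_cast i.isLt
  have hj : (j.val : ℝ) < n := by exact_mod_cast j.isLt
  have : |(i.val : ℝ) - j.val| < n := abs_sub_lt_iff.mpr ⟨by linarith, by linarith⟩
  unfold combLeafD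
  split_ifs <;> linarith [abs_nonneg ((i.val : ℝ) - j.val)]

lemma abs_sub_add_abs_sub_le_of_add_lt {i j t : Fin n} (hij : i ≠ j) (hit : i ≠ t)
    (htj : t ≠ j) (h : combLeafD n M i t + combLeafD n M t j < 2 * combLeafD n M i j + 1) :
    |(i.val : ℝ) - t.val| + |(j.val : ℝ) - t.val| ≤ 2 * |(j.val : ℝ) - i.val| := by
  rw [of_ne hij, of_ne hit, of_ne htj] at h
  have hint : ((|(i.val : ℤ) - t.val| + |(j.val : ℤ) - t.val| : ℤ) : ℝ) <
      ((2 * |(j.val : ℤ) - i.val| : ℤ) : ℝ) + 1 := by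
    push_cast
    rw [abs_sub_comm (j.val : ℝ), abs_sub_comm (j.val : ℝ)]
    linarith
  exact_mod_cast Int.lt_add_one_iff.mp (by exact_mod_cast hint)

lemma length_le_two_of_walkLen_lt (hM : n ≤ M) {G : SimpleGraph (Fin n)} {i j : Fin n}
    (p : G.Walk i j)
    (hp : walkLen (fun a b => ENNReal.ofReal (combLeafD n M a b)) p <
      ENNReal.ofReal (2 * combLeafD n M i j + 1)) :
    p.length ≤ 2 := by
  by_contra! hlong
  have hshort : 2 * combLeafD n M i j + 1 < 3 * (2 * M + 1) := by
    have hnM : (n : ℝ) ≤ M := by exact_mod_cast hM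
    linarith [lt_two_mul_add (M := M) i j]
  have hedges := length_mul_le_walkLen _
    (fun a b hab => ENNReal.ofReal_le_ofReal (two_mul_add_one_le (M := M) hab.ne)) p
  refine (hedges.trans_lt hp).not_ge ?_
  calc ENNReal.ofReal (2 * combLeafD n M i j + 1)
      ≤ ENNReal.ofReal (3 * (2 * M + 1)) := ENNReal.ofReal_le_ofReal hshort.le
    _ = 3 * ENNReal.ofReal (2 * M + 1) := by
      rw [ENNReal.ofReal_mul (by norm_num), ENNReal.ofReal_ofNat]
    _ ≤ p.length * ENNReal.ofReal (2 * M + 1) := by gcongr; exact_mod_cast hlong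

end combLeafD

theorem comb_leaf_two_spanner_two_hop_general (n M : ℕ) (hM : n ≤ M)
    (G : SimpleGraph (Fin n))
    (hspan : ∀ x y : Fin n,
      gdist G (fun a b => ENNReal.ofReal (combLeafD n M a b)) x y ≤
        ENNReal.ofReal (2 * combLeafD n M x y)) :
    ∀ i j : Fin n, i ≠ j → ¬ G.Adj i j →
      ∃ t : Fin n, t ≠ i ∧ t ≠ j ∧ G.Adj i t ∧ G.Adj t j ∧
        |(i.val : ℝ) - (t.val : ℝ)| + |(j.val : ℝ) - (t.val : ℝ)| ≤
          2 * |(j.val : ℝ) - (i.val : ℝ)| := by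
  intro i j hij hadj
  set len := fun a b => ENNReal.ofReal (combLeafD n M a b)
  have hd_nonneg := combLeafD.nonneg (M := M) i j
  obtain ⟨p, hp⟩ : ∃ p : G.Walk i j, walkLen len p < ENNReal.ofReal (2 * combLeafD n M i j + 1) :=
    iInf_lt_iff.mp <| (hspan i j).trans_lt <|
      (ENNReal.ofReal_lt_ofReal_iff (by positivity)).mpr (lt_add_one _)
  have hlen := combLeafD.length_le_two_of_walkLen_lt hM p hp
  match p, hp, hlen with
  | .nil, _, _ => exact absurd rfl hij
  | .cons h .nil, _, _ => exact absurd h hadj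
  | .cons (v := t) hit (.cons htj .nil), hp, _ =>
    have htj' : t ≠ j := by rintro rfl; exact hadj hit
    refine ⟨t, hit.ne.symm, htj', hit, htj,
      combLeafD.abs_sub_add_abs_sub_le_of_add_lt (M := M) hij hit.ne htj' ?_⟩
    rw [walkLen_cons, walkLen_cons, walkLen_nil, add_zero,
      ← ENNReal.ofReal_add (combLeafD.nonneg i t) (combLeafD.nonneg t j)] at hp
    exact (ENNReal.ofReal_lt_ofReal_iff (by positivity)).mp hp
  | .cons _ (.cons _ (.cons _ _)), _, hlen => simp at hlen

/-- Let `n ≥ 2`, `M ≥ n`, and let `G` be a simple graph on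
`{1,…,n}` that is a 2-spanner of the comb leaf metric with parameter `M`. Then
every non-adjacent pair `i ≠ j` admits a common neighbor `t ∉ {i,j}` with
`|i−t| + |j−t| ≤ 2·|j−i|`. -/
theorem comb_leaf_two_spanner_two_hop (n M : ℕ) (hn : 2 ≤ n) (hM : n ≤ M)
    (G : SimpleGraph (Fin n))
    (hspan : ∀ x y : Fin n,
      gdist G (fun a b => ENNReal.ofReal (combLeafD n M a b)) x y ≤
        ENNReal.ofReal (2 * combLeafD n M x y)) :
    ∀ i j : Fin n, i ≠ j → ¬ G.Adj i j →
      ∃ t : Fin n, t ≠ i ∧ t ≠ j ∧ G.Adj i t ∧ G.Adj t j ∧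
        |(i.val : ℝ) - (t.val : ℝ)| + |(j.val : ℝ) - (t.val : ℝ)| ≤
          2 * |(j.val : ℝ) - (i.val : ℝ)| :=
  comb_leaf_two_spanner_two_hop_general n M hM G hspan
end

section
/- Let (X,d) be a finite metric space on n points and let Σ be a (τ,1)-left-sided LSO for (X,d). Then there exists a simple graph G on X with at most τ·n edges that is a 2-spanner of (X,d): with each edge {x,y} of length d(x,y), the walk-distance satisfies d_G(x,y) ≤ 2·d(x,y) for all x,y ∈ X. -/
open scoped ENNReal

/-- `d` is a metric on `X`. -/
def IsMetricD {X : Type*} (d : X → X → ℝ) : Prop :=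
  (∀ x, d x x = 0) ∧ (∀ x y, x ≠ y → 0 < d x y) ∧ (∀ x y, d x y = d y x) ∧
  (∀ x y z, d x z ≤ d x y + d y z)

/-- A `(τ,ρ)`-left-sided LSO for `(X,d)`: a finite family of duplicate-free
lists of points of `X` such that every point occurs in at most `τ` lists, and
for every pair `x,y` some list contains both so that all points at positions at
most those of `x` resp. `y` are within distance `ρ·d(x,y)` of each other. -/
def IsLeftSidedLSO {X : Type*} [DecidableEq X] (d : X → X → ℝ) (τ : ℕ) (ρ : ℝ)
    (F : Finset (List X)) : Prop :=
  (∀ σ ∈ F, σ.Nodup) ∧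
  (∀ x : X, (F.filter (fun σ => x ∈ σ)).card ≤ τ) ∧
  (∀ x y : X, ∃ σ ∈ F, x ∈ σ ∧ y ∈ σ ∧
    ∀ x' ∈ σ, ∀ y' ∈ σ, σ.idxOf x' ≤ σ.idxOf x → σ.idxOf y' ≤ σ.idxOf y →
      d x' y' ≤ ρ * d x y)

/-- If a finite metric space `(X,d)` on `n` points has a
`(τ,1)`-left-sided LSO, then there is a simple graph on `X` with at most `τ·n`
edges that is a 2-spanner of `(X,d)` (edges having length `d`). -/
theorem left_sided_LSO_gives_two_spanner
    (X : Type) [Fintype X] [DecidableEq X] (d : X → X → ℝ) (hd : IsMetricD d)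
    (τ : ℕ) (F : Finset (List X)) (hF : IsLeftSidedLSO d τ 1 F) :
    ∃ G : SimpleGraph X,
      G.edgeSet.ncard ≤ τ * Fintype.card X ∧
      ∀ x y : X, gdist G (fun a b => ENNReal.ofReal (d a b)) x y ≤
        ENNReal.ofReal (2 * d x y) := by
  obtain ⟨hd0, hdpos, hdsymm, hdtri⟩ := hd
  obtain ⟨hnodup, hτ, hpair⟩ := hF
  have dnn : ∀ a b, 0 ≤ d a b := by
    intro a b
    rcases eq_or_ne a b with rfl | h
    · exact le_of_eq (hd0 a).symm
    · exact (hdpos a b h).le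
  -- the graph: connect the head of each list to all elements of the list
  set G : SimpleGraph X :=
    { Adj := fun a b => a ≠ b ∧ ∃ σ ∈ F, a ∈ σ ∧ b ∈ σ ∧
        (σ.head? = some a ∨ σ.head? = some b)
      symm := by
        constructor
        rintro a b ⟨hne, σ, hσ, ha, hb, h⟩
        exact ⟨hne.symm, σ, hσ, hb, ha, h.symm⟩
      loopless := by constructor; rintro a ⟨hne, -⟩; exact hne rfl } with hG
  refine ⟨G, ?_, ?_⟩
  · -- edge count
    classical
    set S : Finset (Sym2 X) :=
      F.biUnion (fun σ => σ.head?.elim ∅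
        (fun h => σ.toFinset.image (fun w => s(h, w)))) with hS
    have hsub : G.edgeSet ⊆ ↑S := by
      intro e he
      induction e using Sym2.ind with
      | _ a b =>
        rw [SimpleGraph.mem_edgeSet] at he
        obtain ⟨hne, σ, hσ, ha, hb, h⟩ := he
        simp only [Finset.coe_biUnion, Set.mem_iUnion, Finset.mem_coe, hS]
        refine ⟨σ, hσ, ?_⟩
        rcases h with h | h
        · rw [h]
          simp only [Option.elim, Finset.mem_image]
          exact ⟨b, List.mem_toFinset.2 hb, rfl⟩
        · rw [h]
          simp only [Option.elim, Finset.mem_image]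
          exact ⟨a, List.mem_toFinset.2 ha, Sym2.eq_swap⟩
    have h1 : G.edgeSet.ncard ≤ S.card := by
      have := Set.ncard_le_ncard hsub S.finite_toSet
      simpa [Set.ncard_coe_finset] using this
    have h2 : S.card ≤ ∑ σ ∈ F, σ.toFinset.card := by
      refine le_trans (Finset.card_biUnion_le) (Finset.sum_le_sum ?_)
      intro σ hσ
      cases hh : σ.head? with
      | none => simp
      | some a => simpa using Finset.card_image_le
    have h3 : ∑ σ ∈ F, σ.toFinset.card
        = ∑ x : X, (F.filter (fun σ => x ∈ σ)).card := by
      have : ∀ σ : List X, σ.toFinset.card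
          = ∑ x : X, (if x ∈ σ then 1 else 0) := by
        intro σ
        rw [← Finset.sum_filter]
        simp only [Finset.sum_const, smul_eq_mul, mul_one]
        congr 1
        ext x
        simp
      simp only [this, Finset.card_filter]
      rw [Finset.sum_comm]
    have h4 : ∑ x : X, (F.filter (fun σ => x ∈ σ)).card ≤ τ * Fintype.card X := by
      calc ∑ x : X, (F.filter (fun σ => x ∈ σ)).card
          ≤ ∑ _x : X, τ := Finset.sum_le_sum (fun x _ => hτ x)
        _ = τ * Fintype.card X := by simp [mul_comm]
    omega
  · -- spanner property
    intro x y
    rcases eq_or_ne x y with rfl | hxy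
    · refine le_trans (iInf_le _ (SimpleGraph.Walk.nil : G.Walk x x)) ?_
      simp [walkLen]
    · obtain ⟨σ, hσF, hx, hy, hprop⟩ := hpair x y
      obtain ⟨a, t, rfl⟩ := List.exists_cons_of_ne_nil (List.ne_nil_of_mem hx)
      have haσ : a ∈ a :: t := List.mem_cons_self
      have hia : (a :: t).idxOf a = 0 := List.idxOf_cons_self
      have hay : d a y ≤ d x y := by
        have := hprop a haσ y hy (by rw [hia]; exact Nat.zero_le _) le_rfl
        linarith
      have hxa : d x a ≤ d x y := by
        have := hprop x hx a haσ le_rfl (by rw [hia]; exact Nat.zero_le _)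
        linarith
      rcases eq_or_ne a x with rfl | hax
      · -- x is head: direct edge x-y
        have hadj : G.Adj a y := ⟨hxy, a :: t, hσF, hx, hy, Or.inl rfl⟩
        have : gdist G (fun u v => ENNReal.ofReal (d u v)) a y ≤
            walkLen (fun u v => ENNReal.ofReal (d u v))
              (SimpleGraph.Walk.cons hadj SimpleGraph.Walk.nil) := iInf_le _ _
        refine this.trans ?_
        simp only [walkLen, SimpleGraph.Walk.darts_cons, SimpleGraph.Walk.darts_nil,
          List.map_cons, List.map_nil, List.sum_cons, List.sum_nil, add_zero]
        exact ENNReal.ofReal_le_ofReal (by linarith [dnn a y])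
      · rcases eq_or_ne a y with rfl | hay'
        · have hadj : G.Adj x a := ⟨hxy, a :: t, hσF, hx, hy, Or.inr rfl⟩
          have : gdist G (fun u v => ENNReal.ofReal (d u v)) x a ≤
              walkLen (fun u v => ENNReal.ofReal (d u v))
                (SimpleGraph.Walk.cons hadj SimpleGraph.Walk.nil) := iInf_le _ _
          refine this.trans ?_
          simp only [walkLen, SimpleGraph.Walk.darts_cons, SimpleGraph.Walk.darts_nil,
            List.map_cons, List.map_nil, List.sum_cons, List.sum_nil, add_zero]
          exact ENNReal.ofReal_le_ofReal (by linarith [dnn x a])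
        · -- path x - a - y
          have hadj1 : G.Adj x a := ⟨fun h => hax h.symm, a :: t, hσF, hx, haσ, Or.inr rfl⟩
          have hadj2 : G.Adj a y := ⟨hay', a :: t, hσF, haσ, hy, Or.inl rfl⟩
          have : gdist G (fun a b => ENNReal.ofReal (d a b)) x y ≤
              walkLen (fun a b => ENNReal.ofReal (d a b))
                (SimpleGraph.Walk.cons hadj1 (SimpleGraph.Walk.cons hadj2
                  SimpleGraph.Walk.nil)) := iInf_le _ _
          refine this.trans ?_
          simp only [walkLen, SimpleGraph.Walk.darts_cons, SimpleGraph.Walk.darts_nil,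
            List.map_cons, List.map_nil, List.sum_cons, List.sum_nil, add_zero]
          rw [← ENNReal.ofReal_add (dnn x a) (dnn a y)]
          exact ENNReal.ofReal_le_ofReal (by linarith)
end
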